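/- Let q : (G,P) → (H,Q) be an (L,C,M)-quasi-isometry of pairs where Q is a reduced collection. Then the relation q̇ = {(A,B) ∈ G/P × H/Q : Hdist_H(q(A), B) < M} is the graph of a surjective function G/P → H/Q. If additionally P is reduced, q̇ is a bijection. -/

import Mathlib

open scoped Pointwise

variable {G : Type*} [Group G]

/-- Word distance between `g` and `h` with respect to a generating set `S` (values in `ℕ∞`). -/
noncomputable def wordDist (S : Set G) (g h : G) : ℕ∞ :=
  sInf {n : ℕ∞ | ∃ l : List G, (∀ x ∈ l, x ∈ S ∨ x⁻¹ ∈ S) ∧ l.prod = g⁻¹ * h ∧ (l.length : ℕ∞) = n}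

/-- Closed `r`-neighbourhood of a subset of `G` in the word metric. -/
def nbhd (S : Set G) (r : ℕ∞) (A : Set G) : Set G := {g | ∃ a ∈ A, wordDist S g a ≤ r}

/-- Hausdorff distance between subsets of `G` in the word metric. -/
noncomputable def hdist (S : Set G) (A B : Set G) : ℕ∞ :=
  sInf {r : ℕ∞ | A ⊆ nbhd S r B ∧ B ⊆ nbhd S r A}

/-- The conjugate subgroup `g P g⁻¹`. -/
def conjSub (g : G) (P : Subgroup G) : Subgroup G := ConjAct.toConjAct g • P

/-- The collection of all left cosets `gP`, `g ∈ G`, `P ∈ Ps`, as subsets of `G`. -/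
def cosetsOf (Ps : Set (Subgroup G)) : Set (Set G) :=
  {A | ∃ (g : G) (P : Subgroup G), P ∈ Ps ∧ A = g • (P : Set G)}

/-- A collection of subgroups is almost malnormal if any conjugate of a member meets any
member in a finite subgroup, except for the trivial configurations. -/
def AlmostMalnormal (Ps : Set (Subgroup G)) : Prop :=
  ∀ P ∈ Ps, ∀ P' ∈ Ps, ∀ g : G,
    ((conjSub g P ⊓ P' : Subgroup G) : Set G).Finite ∨ (P = P' ∧ g ∈ P)

/-- A collection of subgroups is reduced if commensurability of a member with a conjugate of a
member only happens trivially. -/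
def Reduced (Ps : Set (Subgroup G)) : Prop :=
  ∀ P ∈ Ps, ∀ Q ∈ Ps, ∀ g : G, Subgroup.Commensurable P (conjSub g Q) → P = Q ∧ g ∈ P

/-- `q` is an `(L, C, M)`-quasi-isometry of pairs `(G, Ps) → (H, Qs)`: an `(L, C)`-quasi-isometry
of the groups (with respect to the word metrics of `S` and `T`) such that the relation
`{(A, B) : Hdist(q(A), B) < M}` on left cosets projects surjectively to both factors. -/
def IsQIPair {H : Type*} [Group H] (S : Set G) (T : Set H) (q : G → H)
    (Ps : Set (Subgroup G)) (Qs : Set (Subgroup H)) (L C M : ℕ) : Prop :=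
  (∀ a b : G, wordDist T (q a) (q b) ≤ (L : ℕ∞) * wordDist S a b + (C : ℕ∞) ∧
      wordDist S a b ≤ (L : ℕ∞) * wordDist T (q a) (q b) + (C : ℕ∞)) ∧
  (∀ h : H, ∃ g : G, wordDist T (q g) h ≤ (C : ℕ∞)) ∧
  (∀ A ∈ cosetsOf Ps, ∃ B ∈ cosetsOf Qs, hdist T (q '' A) B < (M : ℕ∞)) ∧
  (∀ B ∈ cosetsOf Qs, ∃ A ∈ cosetsOf Ps, hdist T (q '' A) B < (M : ℕ∞))

/-!
Two cosets `h₁Q₁`, `h₂Q₂` at finite Hausdorff distance `n` have commensurable conjugates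
`h₁Q₁h₁⁻¹`, `h₂Q₂h₂⁻¹`: every element of one conjugate lies in `h₁ Bₙ h₂⁻¹` times the other
conjugate, where the `n`-ball `Bₙ` is finite because the generating set is. If two cosets `B₁`,
`B₂` of `Qs` are both `M`-close to `q(A)`, they are `2M`-close to each other, so reducedness of
`Qs` forces `B₁ = B₂`. Symmetrically, if `q(A₁)` and `q(A₂)` are close to the same `B`, the
quasi-isometry inequality pulls this back to finite Hausdorff distance between `A₁` and `A₂`, and
reducedness of `Ps` forces `A₁ = A₂`.
-/

open Set

lemma ENat.sInf_mem_of_ne_top {s : Set ℕ∞} (h : sInf s ≠ ⊤) : sInf s ∈ s :=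
  csInf_mem (nonempty_iff_ne_empty.2 fun he => h (by rw [he, sInf_empty]))

section WordMetric

variable {S : Set G}

lemma wordDist_eq_wordDist_one (S : Set G) (g h : G) :
    wordDist S g h = wordDist S 1 (g⁻¹ * h) := by
  simp only [wordDist, inv_one, one_mul]

lemma exists_word_of_wordDist_ne_top {g h : G} (hd : wordDist S g h ≠ ⊤) :
    ∃ l : List G, (∀ x ∈ l, x ∈ S ∨ x⁻¹ ∈ S) ∧ l.prod = g⁻¹ * h ∧
      (l.length : ℕ∞) = wordDist S g h :=
  ENat.sInf_mem_of_ne_top hd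

lemma wordDist_triangle (S : Set G) (a b c : G) :
    wordDist S a c ≤ wordDist S a b + wordDist S b c := by
  rcases eq_or_ne (wordDist S a b) ⊤ with hab | hab
  · simp [hab]
  rcases eq_or_ne (wordDist S b c) ⊤ with hbc | hbc
  · simp [hbc]
  obtain ⟨l₁, hl₁, hp₁, hn₁⟩ := exists_word_of_wordDist_ne_top hab
  obtain ⟨l₂, hl₂, hp₂, hn₂⟩ := exists_word_of_wordDist_ne_top hbc
  refine sInf_le ⟨l₁ ++ l₂, fun x hx => ?_, ?_, ?_⟩
  · exact (List.mem_append.1 hx).elim (hl₁ x) (hl₂ x)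
  · rw [List.prod_append, hp₁, hp₂]; group
  · rw [List.length_append, Nat.cast_add, hn₁, hn₂]

lemma finite_wordBall (hS : S.Finite) (n : ℕ) : {w : G | wordDist S 1 w ≤ n}.Finite := by
  let U := {x : G | x ∈ S ∨ x⁻¹ ∈ S}
  have : Finite U := (hS.union hS.inv).to_subtype
  refine ((List.finite_length_le U n).image fun l => (l.map Subtype.val).prod).subset ?_
  intro w hw
  obtain ⟨l, hlU, hl, hlen⟩ := exists_word_of_wordDist_ne_top (ne_top_of_le_ne_top (by simp) hw)
  lift l to List U using hlU
  refine ⟨l, ?_, by simpa using hl⟩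
  simpa using (hlen.trans_le hw : ((l.map Subtype.val).length : ℕ∞) ≤ n)

end WordMetric

section Hausdorff

variable {S : Set G}

lemma subset_nbhd_trans {r r' : ℕ∞} {A B C : Set G} (hAB : A ⊆ nbhd S r B)
    (hBC : B ⊆ nbhd S r' C) : A ⊆ nbhd S (r + r') C := by
  intro x hx
  obtain ⟨b, hb, hxb⟩ := hAB hx
  obtain ⟨c, hc, hbc⟩ := hBC hb
  exact ⟨c, hc, (wordDist_triangle S x b c).trans (add_le_add hxb hbc)⟩

lemma subset_nbhd_hdist {A B : Set G} (h : hdist S A B ≠ ⊤) :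
    A ⊆ nbhd S (hdist S A B) B ∧ B ⊆ nbhd S (hdist S A B) A :=
  ENat.sInf_mem_of_ne_top h

lemma hdist_comm (S A B : Set G) : hdist S A B = hdist S B A := by
  simp only [hdist, and_comm]

lemma hdist_triangle (S A B C : Set G) : hdist S A C ≤ hdist S A B + hdist S B C := by
  rcases eq_or_ne (hdist S A B) ⊤ with hAB | hAB
  · simp [hAB]
  rcases eq_or_ne (hdist S B C) ⊤ with hBC | hBC
  · simp [hBC]
  obtain ⟨hA, hB⟩ := subset_nbhd_hdist hAB
  obtain ⟨hB', hC⟩ := subset_nbhd_hdist hBC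
  refine sInf_le ⟨subset_nbhd_trans hA hB', ?_⟩
  rw [add_comm]
  exact subset_nbhd_trans hC hB

lemma subset_nbhd_of_image_subset_nbhd {H : Type*} [Group H] {T : Set H} {q : G → H}
    {L C : ℕ∞} (hq : ∀ a b, wordDist S a b ≤ L * wordDist T (q a) (q b) + C) {r : ℕ∞}
    {A₁ A₂ : Set G} (h : q '' A₁ ⊆ nbhd T r (q '' A₂)) : A₁ ⊆ nbhd S (L * r + C) A₂ := by
  intro a ha
  obtain ⟨_, ⟨b, hb, rfl⟩, hd⟩ := h (mem_image_of_mem q ha)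
  exact ⟨b, hb, (hq a b).trans (by gcongr)⟩

lemma hdist_le_of_hdist_image_ne_top {H : Type*} [Group H] {T : Set H} {q : G → H}
    {L C : ℕ∞} (hq : ∀ a b, wordDist S a b ≤ L * wordDist T (q a) (q b) + C)
    {A₁ A₂ : Set G} (h : hdist T (q '' A₁) (q '' A₂) ≠ ⊤) :
    hdist S A₁ A₂ ≤ L * hdist T (q '' A₁) (q '' A₂) + C :=
  sInf_le ⟨subset_nbhd_of_image_subset_nbhd hq (subset_nbhd_hdist h).1,
    subset_nbhd_of_image_subset_nbhd hq (subset_nbhd_hdist h).2⟩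

end Hausdorff

section Commensurability

lemma Subgroup.relIndex_ne_zero_of_subset_mul {K P : Subgroup G} {F : Set G} (hF : F.Finite)
    (hK : (K : Set G) ⊆ F * P) : P.relIndex K ≠ 0 := by
  choose f hf p hp hfp using fun x : K => mem_mul.1 (hK x.2)
  have : Finite F := hF.to_subtype
  have : Finite (K ⧸ P.subgroupOf K) := by
    refine Finite.of_injective (fun c => (⟨f c.out, hf c.out⟩ : F)) fun c d hcd => ?_
    rw [← c.out_eq', ← d.out_eq', QuotientGroup.eq, Subgroup.mem_subgroupOf]
    have hcd : f c.out = f d.out := congrArg Subtype.val hcd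
    have : ((c.out⁻¹ * d.out : K) : G) = (p c.out)⁻¹ * p d.out := by
      rw [Subgroup.coe_mul, Subgroup.coe_inv, ← hfp, ← hfp, hcd]; group
    rw [this]
    exact P.mul_mem (P.inv_mem (hp _)) (hp _)
  exact Subgroup.index_ne_zero_of_finite

lemma mem_conjSub {g x : G} {P : Subgroup G} : x ∈ conjSub g P ↔ ∃ p ∈ P, g * p * g⁻¹ = x := by
  simp only [conjSub, Subgroup.mem_smul_pointwise_iff_exists, ConjAct.toConjAct_smul]

lemma relIndex_conjSub_ne_zero_of_subset_nbhd {S : Set G} (hS : S.Finite) {n : ℕ} {g₁ g₂ : G}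
    {P₁ P₂ : Subgroup G} (h : g₁ • (P₁ : Set G) ⊆ nbhd S n (g₂ • (P₂ : Set G))) :
    (conjSub g₂ P₂).relIndex (conjSub g₁ P₁) ≠ 0 := by
  refine Subgroup.relIndex_ne_zero_of_subset_mul
    ((finite_wordBall hS n).image fun w => g₁ * w * g₂⁻¹) fun x hx => ?_
  obtain ⟨p, hp, rfl⟩ := mem_conjSub.1 hx
  obtain ⟨_, ⟨p', hp', rfl⟩, hd⟩ := h ⟨p⁻¹, P₁.inv_mem hp, rfl⟩
  rw [wordDist_eq_wordDist_one] at hd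
  refine ⟨_, ⟨_, hd, rfl⟩, _, mem_conjSub.2 ⟨p'⁻¹, P₂.inv_mem hp', rfl⟩, ?_⟩
  simp only [smul_eq_mul]
  group

lemma commensurable_conjSub_of_hdist_ne_top {S : Set G} (hS : S.Finite) {g₁ g₂ : G}
    {P₁ P₂ : Subgroup G} (h : hdist S (g₁ • (P₁ : Set G)) (g₂ • (P₂ : Set G)) ≠ ⊤) :
    Subgroup.Commensurable (conjSub g₁ P₁) (conjSub g₂ P₂) := by
  obtain ⟨h₁₂, h₂₁⟩ := subset_nbhd_hdist h
  lift hdist S (g₁ • (P₁ : Set G)) (g₂ • (P₂ : Set G)) to ℕ using h with n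
  exact ⟨relIndex_conjSub_ne_zero_of_subset_nbhd hS h₂₁,
    relIndex_conjSub_ne_zero_of_subset_nbhd hS h₁₂⟩

lemma Reduced.eq_of_hdist_ne_top {Ps : Set (Subgroup G)} (hPs : Reduced Ps) {S : Set G}
    (hS : S.Finite) {A B : Set G} (hA : A ∈ cosetsOf Ps) (hB : B ∈ cosetsOf Ps)
    (h : hdist S A B ≠ ⊤) : A = B := by
  obtain ⟨g₁, P₁, hP₁, rfl⟩ := hA
  obtain ⟨g₂, P₂, hP₂, rfl⟩ := hB
  have := (commensurable_conjSub_of_hdist_ne_top hS h).conj (ConjAct.toConjAct g₁⁻¹)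
  obtain ⟨rfl, hg⟩ := hPs P₁ hP₁ P₂ hP₂ (g₁⁻¹ * g₂) (by simpa [conjSub, smul_smul] using this)
  rw [← mul_inv_cancel_left g₁ g₂, mul_smul, smul_coe_set hg]

end Commensurability

theorem dotq_function_general {H : Type*} [Group H]
    (S : Set G) (hS : S.Finite)
    (T : Set H) (hT : T.Finite)
    (q : G → H) (Ps : Set (Subgroup G)) (Qs : Set (Subgroup H)) (L C M : ℕ)
    (hq : IsQIPair S T q Ps Qs L C M) (hred : Reduced Qs) :
    ((∀ A ∈ cosetsOf Ps, ∃! B, B ∈ cosetsOf Qs ∧ hdist T (q '' A) B < (M : ℕ∞)) ∧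
      (∀ B ∈ cosetsOf Qs, ∃ A ∈ cosetsOf Ps, hdist T (q '' A) B < (M : ℕ∞))) ∧
    (Reduced Ps →
      ∀ B ∈ cosetsOf Qs, ∃! A, A ∈ cosetsOf Ps ∧ hdist T (q '' A) B < (M : ℕ∞)) := by
  obtain ⟨hqi, -, hfwd, hbwd⟩ := hq
  have close : ∀ {X Y Z : Set H}, hdist T X Y < M → hdist T Y Z < M → hdist T X Z ≠ ⊤ :=
    fun hXY hYZ => ne_top_of_le_ne_top (WithTop.add_ne_top.2 ⟨hXY.ne_top, hYZ.ne_top⟩)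
      (hdist_triangle T _ _ _)
  refine ⟨⟨fun A hA => ?_, hbwd⟩, fun hPs B hB => ?_⟩
  · obtain ⟨B, hB, hAB⟩ := hfwd A hA
    refine ⟨B, ⟨hB, hAB⟩, fun B' ⟨hB', hAB'⟩ => hred.eq_of_hdist_ne_top hT hB' hB ?_⟩
    exact close (hdist_comm T _ _ ▸ hAB') hAB
  · obtain ⟨A, hA, hAB⟩ := hbwd B hB
    refine ⟨A, ⟨hA, hAB⟩, fun A' ⟨hA', hA'B⟩ => hPs.eq_of_hdist_ne_top hS hA' hA ?_⟩
    have hqA : hdist T (q '' A') (q '' A) ≠ ⊤ := close hA'B (hdist_comm T _ _ ▸ hAB)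
    refine ne_top_of_le_ne_top ?_ (hdist_le_of_hdist_image_ne_top (fun a b => (hqi a b).2) hqA)
    exact WithTop.add_ne_top.2
      ⟨WithTop.mul_ne_top (ENat.natCast_ne_top L) hqA, ENat.natCast_ne_top C⟩

/-- For an `(L, C, M)`-quasi-isometry of pairs `q : (G, Ps) → (H, Qs)` with
`Qs` reduced, the relation `q̇` is the graph of a surjective function `G/Ps → H/Qs`; if
moreover `Ps` is reduced, it is a bijection. -/
theorem dotq_function {H : Type*} [Group H]
    (S : Set G) (hS : S.Finite) (hgenS : Subgroup.closure S = ⊤)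
    (T : Set H) (hT : T.Finite) (hgenT : Subgroup.closure T = ⊤)
    (q : G → H) (Ps : Set (Subgroup G)) (Qs : Set (Subgroup H)) (L C M : ℕ)
    (hq : IsQIPair S T q Ps Qs L C M) (hred : Reduced Qs) :
    ((∀ A ∈ cosetsOf Ps, ∃! B, B ∈ cosetsOf Qs ∧ hdist T (q '' A) B < (M : ℕ∞)) ∧
      (∀ B ∈ cosetsOf Qs, ∃ A ∈ cosetsOf Ps, hdist T (q '' A) B < (M : ℕ∞))) ∧
    (Reduced Ps →
      ∀ B ∈ cosetsOf Qs, ∃! A, A ∈ cosetsOf Ps ∧ hdist T (q '' A) B < (M : ℕ∞)) :=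
  dotq_function_general S hS T hT q Ps Qs L C M hq hred
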